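/- Let α > 0, γ_P > 0, γ_I > 0, let Ψ, Ψ_f : ℝ → ℝ^{3×3} be continuous, and let ĩ, θ̃ : ℝ → ℝ³ be differentiable and satisfy the unperturbed error dynamics ĩ'(t) = −α·ĩ(t) + Ψ(t)·θ̃(t) and θ̃'(t) = −γ_P·Ψ(t)ᵀ·ĩ(t) − γ_I·Ψ_f(t)ᵀ·Ψ_f(t)·θ̃(t). Then V(t) := (1/2)|ĩ(t)|² + (1/(2γ_P))|θ̃(t)|² is nonincreasing on [0, ∞); in particular, for all t ≥ 0, |ĩ(t)|² + (1/γ_P)|θ̃(t)|² ≤ |ĩ(0)|² + (1/γ_P)|θ̃(0)|², so all trajectories are globally bounded. -/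

import Mathlib

open Matrix

/-!
`V = ½|ĩ|² + (1/(2γ_P))|θ̃|²` is a Lyapunov function: along the error dynamics the cross terms
`ĩ ⬝ Ψθ̃` and `θ̃ ⬝ Ψᵀĩ` cancel, leaving `V' = -α|ĩ|² - (γ_I/γ_P)|Ψ_f θ̃|² ≤ 0`.
-/

section

variable {ι κ μ : Type*} [Fintype ι] [Fintype κ] [Fintype μ]

theorem sum_sq_eq_dotProduct_self (v : ι → ℝ) : ∑ j, v j ^ 2 = v ⬝ᵥ v := by
  simp only [dotProduct, sq]

theorem HasDerivAt.sum_sq {f : ℝ → ι → ℝ} {f' : ι → ℝ} {t : ℝ} (hf : HasDerivAt f f' t) :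
    HasDerivAt (fun τ => ∑ j, f τ j ^ 2) (2 * (f t ⬝ᵥ f')) t := by
  refine (HasDerivAt.fun_sum fun j _ => (hasDerivAt_pi.mp hf j).fun_pow 2).congr_deriv ?_
  simp only [dotProduct, Finset.mul_sum]
  refine Finset.sum_congr rfl fun j _ => ?_
  push_cast
  ring

theorem errorDynamics_lyapunov_deriv_eq {α γP γI : ℝ} (hγP : γP ≠ 0)
    (Ψ : Matrix ι κ ℝ) (Ψf : Matrix μ κ ℝ) (i : ι → ℝ) (θ : κ → ℝ) :
    (1 / 2) * (2 * (i ⬝ᵥ (-α • i + Ψ *ᵥ θ)))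
      + (1 / (2 * γP)) * (2 * (θ ⬝ᵥ (-γP • (Ψᵀ *ᵥ i) - γI • (Ψfᵀ *ᵥ (Ψf *ᵥ θ)))))
      = -α * (i ⬝ᵥ i) - γI / γP * ((Ψf *ᵥ θ) ⬝ᵥ (Ψf *ᵥ θ)) := by
  have hcross : θ ⬝ᵥ (Ψᵀ *ᵥ i) = i ⬝ᵥ (Ψ *ᵥ θ) := by
    rw [mulVec_transpose, dotProduct_comm, dotProduct_mulVec]
  have hgram : θ ⬝ᵥ (Ψfᵀ *ᵥ (Ψf *ᵥ θ)) = (Ψf *ᵥ θ) ⬝ᵥ (Ψf *ᵥ θ) := by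
    rw [dotProduct_mulVec, vecMul_transpose]
  simp only [dotProduct_add, dotProduct_sub, dotProduct_smul, smul_eq_mul, hcross, hgram]
  field_simp
  ring

theorem errorDynamics_lyapunov_antitone {α γP γI : ℝ} (hα : 0 ≤ α) (hγP : 0 < γP)
    (hγI : 0 ≤ γI) (Ψ : ℝ → Matrix ι κ ℝ) (Ψf : ℝ → Matrix μ κ ℝ) (i : ℝ → ι → ℝ)
    (θ : ℝ → κ → ℝ) (hi : ∀ t, HasDerivAt i (-α • i t + Ψ t *ᵥ θ t) t)
    (hθ : ∀ t, HasDerivAt θ (-γP • ((Ψ t)ᵀ *ᵥ i t) - γI • ((Ψf t)ᵀ *ᵥ (Ψf t *ᵥ θ t))) t) :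
    Antitone fun τ => (1 / 2) * ∑ j, i τ j ^ 2 + (1 / (2 * γP)) * ∑ j, θ τ j ^ 2 := by
  refine antitone_of_hasDerivAt_nonpos
    (fun t => (((hi t).sum_sq).const_mul _).add (((hθ t).sum_sq).const_mul _)) fun t => ?_
  rw [Pi.zero_apply, errorDynamics_lyapunov_deriv_eq hγP.ne']
  have hi_sq : 0 ≤ i t ⬝ᵥ i t := by
    rw [← sum_sq_eq_dotProduct_self]; positivity
  have hθ_sq : 0 ≤ (Ψf t *ᵥ θ t) ⬝ᵥ (Ψf t *ᵥ θ t) := by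
    rw [← sum_sq_eq_dotProduct_self]; positivity
  linarith [mul_nonneg hα hi_sq, mul_nonneg (div_nonneg hγI hγP.le) hθ_sq]

end

theorem composite_identifier_trajectories_bounded_general
    (α γP γI : ℝ) (hα : 0 < α) (hγP : 0 < γP) (hγI : 0 < γI)
    (Ψ Ψf : ℝ → Matrix (Fin 3) (Fin 3) ℝ)
    (itil θtil : ℝ → Fin 3 → ℝ)
    (hitil : ∀ t : ℝ, HasDerivAt itil (-α • itil t + Ψ t *ᵥ θtil t) t)
    (hθtil : ∀ t : ℝ, HasDerivAt θtil
      (-γP • ((Ψ t)ᵀ *ᵥ itil t) - γI • ((Ψf t)ᵀ *ᵥ (Ψf t *ᵥ θtil t))) t) :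
    AntitoneOn
      (fun τ => (1 / 2) * ∑ j : Fin 3, itil τ j ^ 2
        + (1 / (2 * γP)) * ∑ j : Fin 3, θtil τ j ^ 2) (Set.Ici (0 : ℝ)) ∧
    ∀ t : ℝ, 0 ≤ t →
      (∑ j : Fin 3, itil t j ^ 2) + (1 / γP) * ∑ j : Fin 3, θtil t j ^ 2
        ≤ (∑ j : Fin 3, itil 0 j ^ 2) + (1 / γP) * ∑ j : Fin 3, θtil 0 j ^ 2 := by
  have hV := errorDynamics_lyapunov_antitone hα.le hγP hγI.le Ψ Ψf itil θtil hitil hθtil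
  refine ⟨hV.antitoneOn _, fun t ht => ?_⟩
  have hVt := hV ht
  simp only at hVt
  have hscale : ∀ a b : ℝ, a + 1 / γP * b = 2 * ((1 / 2) * a + 1 / (2 * γP) * b) := by
    intro a b
    field_simp
  rw [hscale, hscale]
  linarith

theorem composite_identifier_trajectories_bounded
    (α γP γI : ℝ) (hα : 0 < α) (hγP : 0 < γP) (hγI : 0 < γI)
    (Ψ Ψf : ℝ → Matrix (Fin 3) (Fin 3) ℝ)
    (hΨ : Continuous Ψ) (hΨf : Continuous Ψf)
    (itil θtil : ℝ → Fin 3 → ℝ)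
    (hitil : ∀ t : ℝ, HasDerivAt itil (-α • itil t + Ψ t *ᵥ θtil t) t)
    (hθtil : ∀ t : ℝ, HasDerivAt θtil
      (-γP • ((Ψ t)ᵀ *ᵥ itil t) - γI • ((Ψf t)ᵀ *ᵥ (Ψf t *ᵥ θtil t))) t) :
    AntitoneOn
      (fun τ => (1 / 2) * ∑ j : Fin 3, itil τ j ^ 2
        + (1 / (2 * γP)) * ∑ j : Fin 3, θtil τ j ^ 2) (Set.Ici (0 : ℝ)) ∧
    ∀ t : ℝ, 0 ≤ t →
      (∑ j : Fin 3, itil t j ^ 2) + (1 / γP) * ∑ j : Fin 3, θtil t j ^ 2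
        ≤ (∑ j : Fin 3, itil 0 j ^ 2) + (1 / γP) * ∑ j : Fin 3, θtil 0 j ^ 2 :=
  composite_identifier_trajectories_bounded_general α γP γI hα hγP hγI Ψ Ψf itil θtil hitil hθtil
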